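/- arXiv:0901.1375 — 3 statements merged into one kernel-verified Lean document; each statement's English description precedes it below -/
import Mathlib

section
/- Let S ⊆ ℝ^d be non-empty, and let V ⊆ ℝ^d be the common kernel of all elements of L(S), with natural projection π : ℝ^d → ℝ^d/V; then π(ℤ^d) is a full-rank lattice Λ in ℝ^d/V whose dual lattice is canonically identified with L(S). The lattice width of S relative to ℤ^d equals the lattice width of π(S) relative to Λ, and under the identification Λ* = L(S), the set of lattice width directions of S equals that of π(S). -/
open Set

noncomputable section

section GeneralWidth

variable {W : Type*} [AddCommGroup W] [Module ℝ W]

/-- The width of `S ⊆ W` in the direction of the linear functional `u`. -/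
def dirWidth (S : Set W) (u : W →ₗ[ℝ] ℝ) : ℝ := sSup (u '' S) - sInf (u '' S)

/-- `u` is a lattice direction for `S` relative to the lattice `Λ ⊆ W`: it is a
    nonzero functional taking integer values on `Λ` (i.e. an element of the dual
    lattice) on which `S` is bounded. -/
def IsLatticeDir (Λ S : Set W) (u : W →ₗ[ℝ] ℝ) : Prop :=
  u ≠ 0 ∧ (∀ a ∈ Λ, ∃ n : ℤ, u a = (n : ℝ)) ∧ BddAbove (u '' S) ∧ BddBelow (u '' S)

/-- The lattice width of `S ⊆ W` relative to the lattice `Λ ⊆ W` (`⊤` if there is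
    no lattice direction for `S`). -/
def latticeWidth (Λ S : Set W) : EReal :=
  ⨅ u ∈ {u : W →ₗ[ℝ] ℝ | IsLatticeDir Λ S u}, ((dirWidth S u : ℝ) : EReal)

/-- The set of lattice width directions of `S ⊆ W` relative to the lattice `Λ ⊆ W`. -/
def widthDirs (Λ S : Set W) : Set (W →ₗ[ℝ] ℝ) :=
  {u | IsLatticeDir Λ S u ∧ ((dirWidth S u : ℝ) : EReal) = latticeWidth Λ S}

end GeneralWidth

/-- The standard lattice `ℤ^d ⊆ ℝ^d`. -/
def stdLattice (d : ℕ) : Set (Fin d → ℝ) := {x | ∀ i, ∃ n : ℤ, x i = (n : ℝ)}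

/-!
Every lattice direction `u` of `S` vanishes on `V`, so it factors as `v ∘ π`, and
`width(S, v ∘ π) = width(π S, v)`; hence the lattice directions of `S` are exactly the pullbacks
of those of `π S`, which gives both width statements.

Descended to `ℝ^d/V`, the lattice directions of `S` have no common zero besides `0`, so some of
them are the coordinate functionals of a basis of `ℝ^d/V ≅ ℝ^k`. In these coordinates `π(ℤ^d)`
is a subgroup of `ℤ^k` spanning `ℝ^k`, hence a discrete full-rank subgroup, i.e. a lattice.

Finally, any `v` integral on `π(ℤ^d)` pulls back to a functional vanishing on `V`, i.e. to an
element of `V^⊥ = span L(S)`; functionals bounded on `S` form a subspace, so `v ∘ π ∈ L(S)`.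
-/

open Module Submodule

theorem Subspace.dualAnnihilator_eq_span_of_coe_eq {K E : Type*} [Field K] [AddCommGroup E]
    [Module K E] [FiniteDimensional K E] {D : Set (Dual K E)} {V : Subspace K E}
    (hV : (V : Set E) = {x | ∀ f ∈ D, f x = 0}) :
    V.dualAnnihilator = span K D := by
  rw [show V = (span K D).dualCoannihilator from
      SetLike.coe_injective (hV.trans (coe_dualCoannihilator_span D).symm),
    Subspace.dualCoannihilator_dualAnnihilator_eq]

theorem Module.Basis.exists_coord_mem {K E : Type*} [Field K] [AddCommGroup E]
    [Module K E] [FiniteDimensional K E] {D : Set (Dual K E)}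
    (hD : ∀ x, (∀ f ∈ D, f x = 0) → x = 0) :
    ∃ (n : ℕ) (B : Basis (Fin n) K E), ∀ i, B.coord i ∈ D := by
  classical
  have hspan : span K D = ⊤ := by
    rw [← Subspace.dualAnnihilator_eq_span_of_coe_eq (V := ⊥), dualAnnihilator_bot]
    ext x
    exact ⟨by rintro rfl f -; exact map_zero f, hD x⟩
  obtain ⟨t, htD, hspan_t, hli⟩ := exists_linearIndependent K D
  have : Finite t := hli.finite
  let B₀ : Basis t K (Dual K E) := Basis.mk hli (by rw [Subtype.range_coe, hspan_t, hspan])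
  -- the basis of `E` whose coordinate functionals are the vectors of `B₀`
  let B : Basis t K E := B₀.dualBasis.map (evalEquiv K E).symm
  refine ⟨Nat.card t, B.reindex (Finite.equivFin t), fun i => ?_⟩
  convert htD ((Finite.equivFin t).symm i).2 using 1
  ext x
  rw [Basis.coord_apply, Basis.repr_reindex_apply, Basis.map_repr, LinearEquiv.trans_apply,
    LinearEquiv.symm_symm, Basis.dualBasis_repr, Basis.mk_apply]
  rfl

theorem Submodule.coe_span_int_range_eq {E ι : Type*} [AddCommGroup E] [Module ℝ E] [Fintype ι]
    (v : ι → E) :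
    (span ℤ (range v) : Set E) = {y | ∃ n : ι → ℤ, y = ∑ i, (n i : ℝ) • v i} := by
  ext y
  simp only [SetLike.mem_coe, mem_span_range_iff_exists_fun, Int.cast_smul_eq_zsmul, eq_comm,
    mem_ofPred_eq]

theorem Module.Basis.exists_basis_span_int_eq {E ι : Type*} [AddCommGroup E] [Module ℝ E]
    [FiniteDimensional ℝ E] [Fintype ι] (B : Basis ι ℝ E) (L : Submodule ℤ E)
    (hspan : span ℝ (L : Set E) = ⊤) (hL : ∀ x ∈ L, ∀ i, ∃ n : ℤ, B.repr x i = n) :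
    ∃ B' : Basis (Fin (finrank ℝ E)) ℝ E, span ℤ (range B') = L := by
  let e : E ≃ₗ[ℝ] (ι → ℝ) := B.equivFun
  let L' : Submodule ℤ (ι → ℝ) := L.map (e.restrictScalars ℤ : E →ₗ[ℤ] (ι → ℝ))
  have hL'_int : L' ≤ span ℤ (range (Pi.basisFun ℝ ι)) := by
    rintro _ ⟨x, hx, rfl⟩
    rw [Basis.mem_span_iff_repr_mem]
    intro i
    obtain ⟨n, hn⟩ := hL x hx i
    exact ⟨n, by simp [e, hn]⟩
  have : DiscreteTopology L' :=
    DiscreteTopology.of_subset ZSpan.discreteTopology_pi_basisFun hL'_int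
  have : IsZLattice ℝ L' := ⟨by
    rw [show (L' : Set (ι → ℝ)) = (e : E →ₗ[ℝ] (ι → ℝ)) '' L from map_coe _ _,
      span_image, hspan, Submodule.map_top, LinearEquiv.range]⟩
  have : Free ℤ L' := ZLattice.module_free ℝ L'
  have : Module.Finite ℤ L' := ZLattice.module_finite ℝ L'
  let b := (Free.chooseBasis ℤ L').ofZLatticeBasis ℝ L'
  have hcard : Fintype.card (Free.ChooseBasisIndex ℤ L') = finrank ℝ E := by
    rw [e.finrank_eq, finrank_eq_card_basis b]
  refine ⟨(b.map e.symm).reindex (Fintype.equivFinOfCardEq hcard), ?_⟩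
  rw [Basis.range_reindex, Basis.coe_map, range_comp,
    show ⇑e.symm = ⇑(e.symm.restrictScalars ℤ : (ι → ℝ) →ₗ[ℤ] E) from rfl,
    span_image, Basis.ofZLatticeBasis_span]
  exact (map_symm_eq_iff (e.restrictScalars ℤ)).mpr rfl

section LatticeDirections

variable {E F : Type*} [AddCommGroup E] [Module ℝ E] [AddCommGroup F] [Module ℝ F]

def dualLattice (Λ : Set E) : Set (Dual ℝ E) := {u | ∀ a ∈ Λ, ∃ n : ℤ, u a = n}

def boundedFunctionals (S : Set E) : Submodule ℝ (Dual ℝ E) where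
  carrier := {u | Bornology.IsBounded (u '' S)}
  zero_mem' := by
    rw [mem_ofPred_eq]
    exact Bornology.isBounded_singleton.subset (by rintro _ ⟨x, -, rfl⟩; rfl)
  add_mem' {u v} hu hv := by
    rw [mem_ofPred_eq] at *
    refine (hu.add hv).subset ?_
    rintro _ ⟨x, hx, rfl⟩
    exact add_mem_add (mem_image_of_mem u hx) (mem_image_of_mem v hx)
  smul_mem' c u hu := by
    rw [mem_ofPred_eq] at *
    refine (hu.smul₀ c).subset ?_
    rintro _ ⟨x, hx, rfl⟩
    exact smul_mem_smul_set (mem_image_of_mem u hx)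

theorem mem_boundedFunctionals {S : Set E} {u : Dual ℝ E} :
    u ∈ boundedFunctionals S ↔ BddAbove (u '' S) ∧ BddBelow (u '' S) :=
  (isBounded_iff_bddBelow_bddAbove (s := u '' S)).trans and_comm

theorem dirWidth_comp (S : Set E) (f : E →ₗ[ℝ] F) (u : Dual ℝ F) :
    dirWidth S (u.comp f) = dirWidth (f '' S) u := by
  rw [dirWidth, dirWidth, LinearMap.coe_comp, image_comp]

variable {f : E →ₗ[ℝ] F} (hf : Function.Surjective f) (Λ S : Set E)
include hf

theorem isLatticeDir_comp_iff (u : Dual ℝ F) :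
    IsLatticeDir Λ S (u.comp f) ↔ IsLatticeDir (f '' Λ) (f '' S) u := by
  rw [IsLatticeDir, IsLatticeDir, LinearMap.coe_comp, image_comp, forall_mem_image,
    ← LinearMap.zero_comp f, Ne, LinearMap.cancel_right hf]
  rfl

variable {Λ S} in
theorem setOf_isLatticeDir_eq_image
    (hfac : ∀ u, IsLatticeDir Λ S u → ∃ v : Dual ℝ F, v.comp f = u) :
    {u | IsLatticeDir Λ S u} =
      (fun v : Dual ℝ F => v.comp f) '' {v | IsLatticeDir (f '' Λ) (f '' S) v} := by
  ext u
  constructor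
  · intro hu
    obtain ⟨v, rfl⟩ := hfac u hu
    exact ⟨v, (isLatticeDir_comp_iff hf Λ S v).mp hu, rfl⟩
  · rintro ⟨v, hv, rfl⟩
    exact (isLatticeDir_comp_iff hf Λ S v).mpr hv

variable {Λ S} in
theorem latticeWidth_image_eq
    (hfac : ∀ u, IsLatticeDir Λ S u → ∃ v : Dual ℝ F, v.comp f = u) :
    latticeWidth Λ S = latticeWidth (f '' Λ) (f '' S) := by
  rw [latticeWidth, setOf_isLatticeDir_eq_image hf hfac, iInf_image]
  simp_rw [dirWidth_comp]
  rfl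

variable {Λ S} in
theorem widthDirs_eq_image
    (hfac : ∀ u, IsLatticeDir Λ S u → ∃ v : Dual ℝ F, v.comp f = u) :
    widthDirs Λ S = (fun v : Dual ℝ F => v.comp f) '' widthDirs (f '' Λ) (f '' S) := by
  ext u
  constructor
  · rintro ⟨hu, hwidth⟩
    obtain ⟨v, rfl⟩ := hfac u hu
    refine ⟨v, ⟨(isLatticeDir_comp_iff hf Λ S v).mp hu, ?_⟩, rfl⟩
    rw [← dirWidth_comp, hwidth, latticeWidth_image_eq hf hfac]
  · rintro ⟨v, ⟨hv, hwidth⟩, rfl⟩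
    refine ⟨(isLatticeDir_comp_iff hf Λ S v).mpr hv, ?_⟩
    rw [dirWidth_comp, hwidth, latticeWidth_image_eq hf hfac]

end LatticeDirections

section QuotientByCommonKernel

variable {E : Type*} [AddCommGroup E] [Module ℝ E] {Λ S : Set E} {V : Submodule ℝ E}
  (hV : (V : Set E) = {x | ∀ u : Dual ℝ E, IsLatticeDir Λ S u → u x = 0})
include hV

theorem exists_comp_mkQ_eq {u : Dual ℝ E} (hu : IsLatticeDir Λ S u) :
    ∃ v : Dual ℝ (E ⧸ V), v.comp V.mkQ = u := by
  have hVu : V ≤ LinearMap.ker u := fun x hx => by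
    have hx : x ∈ (V : Set E) := hx
    rw [hV] at hx
    exact hx u hu
  exact ⟨V.liftQ u hVu, V.liftQ_mkQ u hVu⟩

variable [FiniteDimensional ℝ E]

theorem dualLattice_inter_boundedFunctionals_eq :
    dualLattice Λ ∩ boundedFunctionals S =
      (fun v : Dual ℝ (E ⧸ V) => v.comp V.mkQ) '' dualLattice (V.mkQ '' Λ) := by
  ext u
  constructor
  · rintro ⟨hint, hbdd⟩
    by_cases hu : u = 0
    · exact ⟨0, fun _ _ => ⟨0, by simp⟩, hu ▸ LinearMap.zero_comp _⟩
    obtain ⟨v, rfl⟩ := exists_comp_mkQ_eq hV ⟨hu, hint, mem_boundedFunctionals.mp hbdd⟩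
    exact ⟨v, forall_mem_image.mpr hint, rfl⟩
  · rintro ⟨v, hv, rfl⟩
    refine ⟨fun a ha => hv _ (mem_image_of_mem _ ha), ?_⟩
    have hann : v.comp V.mkQ ∈ V.dualAnnihilator := by
      rw [mem_dualAnnihilator]
      intro x hx
      rw [LinearMap.comp_apply, mkQ_apply, (Quotient.mk_eq_zero V).mpr hx, map_zero]
    rw [Subspace.dualAnnihilator_eq_span_of_coe_eq (D := {u | IsLatticeDir Λ S u}) hV] at hann
    exact span_le.mpr (fun u hu => mem_boundedFunctionals.mpr hu.2.2) hann

end QuotientByCommonKernel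

theorem exists_basis_image_mkQ_eq {E : Type*} [AddCommGroup E] [Module ℝ E]
    [FiniteDimensional ℝ E] {Λ : Submodule ℤ E} {S : Set E} {V : Submodule ℝ E}
    (hΛ : span ℝ (Λ : Set E) = ⊤)
    (hV : (V : Set E) = {x | ∀ u : Dual ℝ E, IsLatticeDir Λ S u → u x = 0}) :
    ∃ B : Basis (Fin (finrank ℝ (E ⧸ V))) ℝ (E ⧸ V),
      V.mkQ '' Λ = {y | ∃ n : Fin (finrank ℝ (E ⧸ V)) → ℤ, y = ∑ i, (n i : ℝ) • B i} := by
  obtain ⟨n, B, hB⟩ := Basis.exists_coord_mem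
    (D := {v : Dual ℝ (E ⧸ V) | IsLatticeDir (V.mkQ '' Λ) (V.mkQ '' S) v}) (by
      intro y hy
      obtain ⟨x, rfl⟩ := V.mkQ_surjective y
      rw [mkQ_apply, Quotient.mk_eq_zero, ← SetLike.mem_coe, hV]
      intro u hu
      obtain ⟨v, rfl⟩ := exists_comp_mkQ_eq hV hu
      exact hy v ((isLatticeDir_comp_iff V.mkQ_surjective _ _ v).mp hu))
  let L : Submodule ℤ (E ⧸ V) := Λ.map (V.mkQ.restrictScalars ℤ)
  have hL : (L : Set (E ⧸ V)) = V.mkQ '' Λ := map_coe _ _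
  have hL_span : span ℝ (L : Set (E ⧸ V)) = ⊤ := by
    rw [hL, span_image, hΛ, Submodule.map_top, range_mkQ]
  obtain ⟨B', hB'⟩ := B.exists_basis_span_int_eq L hL_span fun y hy i =>
    (hB i).2.1 y (hL ▸ hy)
  exact ⟨B', by rw [← hL, ← hB', coe_span_int_range_eq]⟩

theorem stdLattice_eq_span (d : ℕ) :
    stdLattice d = span ℤ (range (Pi.basisFun ℝ (Fin d))) := by
  ext x
  rw [SetLike.mem_coe, Basis.mem_span_iff_repr_mem]
  exact forall_congr' fun i => exists_congr fun n => eq_comm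

theorem width_projection_general {d : ℕ} (S : Set (Fin d → ℝ))
    (V : Submodule ℝ (Fin d → ℝ))
    (hV : (V : Set (Fin d → ℝ)) =
      {x | ∀ u : (Fin d → ℝ) →ₗ[ℝ] ℝ, IsLatticeDir (stdLattice d) S u → u x = 0}) :
    -- `π(ℤ^d)` is a full-rank lattice in `ℝ^d/V`:
    (∃ b : Module.Basis (Fin (Module.finrank ℝ ((Fin d → ℝ) ⧸ V))) ℝ ((Fin d → ℝ) ⧸ V),
      V.mkQ '' stdLattice d =
        {y | ∃ n : Fin (Module.finrank ℝ ((Fin d → ℝ) ⧸ V)) → ℤ,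
          y = ∑ i, (n i : ℝ) • b i}) ∧
    -- its dual lattice is canonically identified with `L(S)` via `u ↦ u ∘ π`:
    ({u : (Fin d → ℝ) →ₗ[ℝ] ℝ |
        (∀ a ∈ stdLattice d, ∃ n : ℤ, u a = (n : ℝ)) ∧
        BddAbove (u '' S) ∧ BddBelow (u '' S)} =
      (fun u : ((Fin d → ℝ) ⧸ V) →ₗ[ℝ] ℝ => u.comp V.mkQ) ''
        {u | ∀ a ∈ V.mkQ '' stdLattice d, ∃ n : ℤ, u a = (n : ℝ)}) ∧
    -- the lattice width of `S` rel. `ℤ^d` equals that of `π(S)` rel. `Λ`: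
    latticeWidth (stdLattice d) S = latticeWidth (V.mkQ '' stdLattice d) (V.mkQ '' S) ∧
    -- under the identification, `S'` equals `π(S)'`:
    widthDirs (stdLattice d) S =
      (fun u : ((Fin d → ℝ) ⧸ V) →ₗ[ℝ] ℝ => u.comp V.mkQ) ''
        widthDirs (V.mkQ '' stdLattice d) (V.mkQ '' S) := by
  have hfac := fun u (hu : IsLatticeDir (stdLattice d) S u) => exists_comp_mkQ_eq hV hu
  refine ⟨?_, ?_, latticeWidth_image_eq V.mkQ_surjective hfac,
    widthDirs_eq_image V.mkQ_surjective hfac⟩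
  · rw [stdLattice_eq_span] at hV ⊢
    exact exists_basis_image_mkQ_eq (by rw [span_span_of_tower, Basis.span_eq]) hV
  · refine (Set.ext fun u => ?_).trans (dualLattice_inter_boundedFunctionals_eq hV)
    rw [mem_inter_iff, SetLike.mem_coe, mem_boundedFunctionals]
    rfl

/-- Let `S ⊆ ℝ^d` be nonempty, let `V` be the common kernel of all lattice directions
    of `S` (the elements of `L(S)`), and let `π : ℝ^d → ℝ^d/V` be the natural
    projection.  Then `Λ = π(ℤ^d)` is a full-rank lattice in `ℝ^d/V`, whose dual
    lattice is canonically identified with `L(S)` via `u ↦ u ∘ π`; under this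
    identification the lattice width of `π(S)` relative to `Λ` equals the lattice
    width of `S` relative to `ℤ^d`, and the lattice width directions of `π(S)`
    correspond exactly to those of `S`. -/
theorem width_projection {d : ℕ} (S : Set (Fin d → ℝ)) (hS : S.Nonempty)
    (V : Submodule ℝ (Fin d → ℝ))
    (hV : (V : Set (Fin d → ℝ)) =
      {x | ∀ u : (Fin d → ℝ) →ₗ[ℝ] ℝ, IsLatticeDir (stdLattice d) S u → u x = 0}) :
    -- `π(ℤ^d)` is a full-rank lattice in `ℝ^d/V`:
    (∃ b : Module.Basis (Fin (Module.finrank ℝ ((Fin d → ℝ) ⧸ V))) ℝ ((Fin d → ℝ) ⧸ V),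
      V.mkQ '' stdLattice d =
        {y | ∃ n : Fin (Module.finrank ℝ ((Fin d → ℝ) ⧸ V)) → ℤ,
          y = ∑ i, (n i : ℝ) • b i}) ∧
    -- its dual lattice is canonically identified with `L(S)` via `u ↦ u ∘ π`:
    ({u : (Fin d → ℝ) →ₗ[ℝ] ℝ |
        (∀ a ∈ stdLattice d, ∃ n : ℤ, u a = (n : ℝ)) ∧
        BddAbove (u '' S) ∧ BddBelow (u '' S)} =
      (fun u : ((Fin d → ℝ) ⧸ V) →ₗ[ℝ] ℝ => u.comp V.mkQ) ''
        {u | ∀ a ∈ V.mkQ '' stdLattice d, ∃ n : ℤ, u a = (n : ℝ)}) ∧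
    -- the lattice width of `S` rel. `ℤ^d` equals that of `π(S)` rel. `Λ`:
    latticeWidth (stdLattice d) S = latticeWidth (V.mkQ '' stdLattice d) (V.mkQ '' S) ∧
    -- under the identification, `S'` equals `π(S)'`:
    widthDirs (stdLattice d) S =
      (fun u : ((Fin d → ℝ) ⧸ V) →ₗ[ℝ] ℝ => u.comp V.mkQ) ''
        widthDirs (V.mkQ '' stdLattice d) (V.mkQ '' S) :=
  width_projection_general S V hV
end
end

section
/- Let d ≥ 2 and let P ⊆ ℝ^d be a d-dimensional centrally-symmetric lattice polytope with P°_ℤ = {0} and |P_ℤ| = 3^d. For all x, y ∈ P_ℤ there exists a unique z ∈ P_ℤ such that w := (x + y + z)/3 ∈ ℤ^d; moreover this w lies in P_ℤ, and if x ≠ y then z ≠ x and z ≠ y. -/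
open Set

noncomputable section

/-- Coordinatewise cast of an integer vector into `ℝ^d`. -/
def ic {d : ℕ} (v : Fin d → ℤ) : Fin d → ℝ := fun i => (v i : ℝ)

/-- `P_ℤ`: the set of lattice points of `ℤ^d` lying in `P`. -/
def latticePts {d : ℕ} (P : Set (Fin d → ℝ)) : Set (Fin d → ℤ) := {x | ic x ∈ P}

/-- `P°_ℤ`: the set of lattice points of `ℤ^d` lying in the relative interior of `P`. -/
def relintLatticePts {d : ℕ} (P : Set (Fin d → ℝ)) : Set (Fin d → ℤ) :=
  {x | ic x ∈ intrinsicInterior ℝ P}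

/-- `P` is a lattice polytope: the convex hull of finitely many points of `ℤ^d`. -/
def IsLatticePolytope {d : ℕ} (P : Set (Fin d → ℝ)) : Prop :=
  ∃ V : Finset (Fin d → ℤ), P = convexHull ℝ (ic '' ↑V)

/-- `F` is a face of the convex set `P`: a convex extreme subset of `P`. -/
def IsFaceOf {d : ℕ} (P F : Set (Fin d → ℝ)) : Prop :=
  IsExtreme ℝ P F ∧ Convex ℝ F
theorem neg_mem_interior' {d : ℕ} (P : Set (Fin d → ℝ)) (hsym : P = -P) (p : Fin d → ℝ)
    (hp : p ∈ interior P) : -p ∈ interior P := by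
  have h3 : Neg.neg ⁻¹' P = P := by
    ext q
    simp only [Set.mem_preimage]
    constructor
    · intro hq; rw [hsym]; simpa [Set.mem_neg] using hq
    · intro hq; rw [hsym] at hq; simpa [Set.mem_neg] using hq
  have h2 : Neg.neg ⁻¹' (interior P) = interior (Neg.neg ⁻¹' P) := by
    have := (Homeomorph.neg (Fin d → ℝ)).preimage_interior P
    simpa using this
  have h1 : p ∈ Neg.neg ⁻¹' (interior P) := by rw [h2, h3]; exact hp
  exact h1

/-- Lattice points of `P` are pairwise incongruent mod 3. -/
theorem incongruent_mod_three {d : ℕ} (P : Set (Fin d → ℝ)) (hconv : Convex ℝ P)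
    (hdim : affineSpan ℝ P = ⊤) (hsym : P = -P)
    (hint : relintLatticePts P = {0}) :
    ∀ a ∈ latticePts P, ∀ b ∈ latticePts P, (∀ i, (3:ℤ) ∣ a i - b i) → a = b := by
  obtain ⟨p, hp⟩ : (interior P).Nonempty :=
    (hconv.interior_nonempty_iff_affineSpan_eq_top).2 hdim
  have hnp : -p ∈ interior P := neg_mem_interior' P hsym p hp
  have h0 : (0 : Fin d → ℝ) ∈ interior P := by
    have := hconv.combo_interior_self_mem_interior hp (interior_subset hnp)
      (by norm_num : (0:ℝ) < 1/2) (by norm_num : (0:ℝ) ≤ 1/2) (by norm_num)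
    convert this using 1
    module
  intro a ha b hb hdvd
  set v : Fin d → ℤ := fun i => (a i - b i) / 3 with hv
  have hv3 : ∀ i, 3 * v i = a i - b i := fun i => Int.mul_ediv_cancel' (hdvd i)
  have hbP : -ic b ∈ P := by rw [hsym] at hb; exact hb
  have hm : (1/2 : ℝ) • ic a + (1/2 : ℝ) • (-ic b) ∈ P :=
    hconv ha hbP (by norm_num) (by norm_num) (by norm_num)
  have hvi : ic v ∈ interior P := by
    have := hconv.combo_interior_self_mem_interior h0 hm
      (by norm_num : (0:ℝ) < 1/3) (by norm_num : (0:ℝ) ≤ 2/3) (by norm_num)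
    convert this using 1
    funext i
    have h3v : ((3:ℤ) * v i : ℝ) = (a i : ℝ) - b i := by exact_mod_cast congrArg Int.cast (hv3 i)
    push_cast at h3v
    simp only [ic, Pi.add_apply, Pi.smul_apply, Pi.neg_apply, Pi.zero_apply, smul_eq_mul]
    ring_nf
    linarith
  have hmem : v ∈ relintLatticePts P :=
    interior_subset_intrinsicInterior (𝕜 := ℝ) hvi
  rw [hint] at hmem
  funext i
  have h0i : v i = 0 := congrFun hmem i
  have := hv3 i
  omega

/-- Key lemma: let `P` be a `d`-dimensional (`d ≥ 2`) centrally-symmetric lattice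
    polytope with `P°_ℤ = {0}` and `|P_ℤ| = 3^d`.  For all `x, y ∈ P_ℤ` there is a
    unique `z ∈ P_ℤ` with `w := (x + y + z)/3 ∈ ℤ^d`; moreover any such `w` lies in
    `P_ℤ`, and if `x ≠ y` then `z ≠ x` and `z ≠ y`. -/
theorem key_lemma {d : ℕ} (hd : 2 ≤ d) (P : Set (Fin d → ℝ))
    (hpoly : IsLatticePolytope P) (hdim : affineSpan ℝ P = ⊤)
    (hsym : P = -P) (hint : relintLatticePts P = {0})
    (hcard : (latticePts P).ncard = 3 ^ d) :
    ∀ x ∈ latticePts P, ∀ y ∈ latticePts P,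
      (∃! z : Fin d → ℤ, z ∈ latticePts P ∧ ∃ w : Fin d → ℤ, x + y + z = 3 • w) ∧
      (∀ z ∈ latticePts P, ∀ w : Fin d → ℤ, x + y + z = 3 • w →
        w ∈ latticePts P ∧ (x ≠ y → z ≠ x ∧ z ≠ y)) := by
  obtain ⟨V, hV⟩ := hpoly
  have hconv : Convex ℝ P := hV ▸ convex_convexHull ℝ _
  have hkey := incongruent_mod_three P hconv hdim hsym hint
  -- finiteness
  have hfin : (latticePts P).Finite := by
    by_contra hinf
    rw [Set.Infinite.ncard hinf] at hcard
    exact (pow_ne_zero d (by norm_num : (3:ℕ) ≠ 0)) hcard.symm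
  set S : Finset (Fin d → ℤ) := hfin.toFinset with hS
  have hScard : S.card = 3 ^ d := by
    rw [← hcard, Set.ncard_eq_toFinset_card _ hfin]
  set g : (Fin d → ℤ) → (Fin d → ZMod 3) := fun v i => ((v i : ℤ) : ZMod 3) with hg
  have hdvd_of_g : ∀ a b : Fin d → ℤ, g a = g b → ∀ i, (3:ℤ) ∣ a i - b i := by
    intro a b hab i
    have : ((a i - b i : ℤ) : ZMod 3) = 0 := by
      push_cast
      rw [sub_eq_zero]
      exact congrFun hab i
    exact_mod_cast (ZMod.intCast_zmod_eq_zero_iff_dvd _ 3).1 this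
  have hinj : Set.InjOn g ↑S := by
    intro a ha b hb hab
    rw [hS, Set.Finite.coe_toFinset] at ha hb
    exact hkey a ha b hb (hdvd_of_g a b hab)
  have himg : S.image g = Finset.univ := by
    apply Finset.eq_univ_of_card
    rw [Finset.card_image_of_injOn hinj, hScard]
    simp [ZMod.card]
  have hsurj : ∀ t : Fin d → ZMod 3, ∃ z ∈ latticePts P, g z = t := by
    intro t
    have : t ∈ S.image g := himg ▸ Finset.mem_univ t
    obtain ⟨z, hz, hgz⟩ := Finset.mem_image.1 this
    exact ⟨z, (hfin.mem_toFinset).1 hz, hgz⟩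
  intro x hx y hy
  -- the congruence target
  obtain ⟨z, hzP, hgz⟩ := hsurj (fun i => ((-(x i + y i) : ℤ) : ZMod 3))
  have hzdvd : ∀ i, (3:ℤ) ∣ x i + y i + z i := by
    intro i
    have h1 : ((z i : ℤ) : ZMod 3) = ((-(x i + y i) : ℤ) : ZMod 3) := congrFun hgz i
    have : ((x i + y i + z i : ℤ) : ZMod 3) = 0 := by push_cast at h1 ⊢; rw [h1]; ring
    exact_mod_cast (ZMod.intCast_zmod_eq_zero_iff_dvd _ 3).1 this
  refine ⟨⟨z, ⟨hzP, ⟨fun i => (x i + y i + z i) / 3, ?_⟩⟩, ?_⟩, ?_⟩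
  · funext i
    have h2 := Int.mul_ediv_cancel' (hzdvd i)
    simp only [Pi.add_apply, Pi.smul_apply, smul_eq_mul, nsmul_eq_mul]
    push_cast
    omega
  · -- uniqueness
    rintro z' ⟨hz'P, w', hw'⟩
    apply hkey z' hz'P z hzP
    intro i
    have h1 : x i + y i + z' i = 3 * w' i := by
      have := congrFun hw' i
      simpa using this
    have := hzdvd i
    omega
  · -- moreover
    rintro z₀ hz₀ w hw
    have hwcoord : ∀ i, x i + y i + z₀ i = 3 * w i := by
      intro i
      have := congrFun hw i
      simpa using this
    constructor
    · -- w ∈ latticePts P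
      have hm2 : (1/2 : ℝ) • ic x + (1/2 : ℝ) • ic y ∈ P :=
        hconv hx hy (by norm_num) (by norm_num) (by norm_num)
      have : (2/3 : ℝ) • ((1/2 : ℝ) • ic x + (1/2 : ℝ) • ic y) + (1/3 : ℝ) • ic z₀ ∈ P :=
        hconv hm2 hz₀ (by norm_num) (by norm_num) (by norm_num)
      have heq : ic w = (2/3 : ℝ) • ((1/2 : ℝ) • ic x + (1/2 : ℝ) • ic y) + (1/3 : ℝ) • ic z₀ := by
        funext i
        have h3w : ((3:ℤ) * w i : ℝ) = (x i : ℝ) + y i + z₀ i := by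
          exact_mod_cast congrArg Int.cast (hwcoord i).symm
        push_cast at h3w
        simp only [ic, Pi.add_apply, Pi.smul_apply, smul_eq_mul]
        ring_nf
        linarith
      show ic w ∈ P
      rw [heq]; exact this
    · intro hxy
      constructor
      · intro h
        exact hxy (hkey x hx y hy (fun i => by
          have h1 := hwcoord i
          have h2 : z₀ i = x i := congrFun h i
          omega))
      · intro h
        exact hxy (hkey x hx y hy (fun i => by
          have h1 := hwcoord i
          have h2 : z₀ i = y i := congrFun h i
          omega))
end
end

section
/- Let d ≥ 2 and let P ⊆ ℝ^d be a d-dimensional centrally-symmetric lattice polytope with P°_ℤ = {0} and |P_ℤ| = 3^d. Then for every k with 1 ≤ k ≤ d−1 there exists a proper face F of P with dim(F) ≥ k such that the relative interior of F contains a lattice point. In particular (k = d−1), P has a facet whose relative interior contains a lattice point. -/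
open Set

noncomputable section

/-!
Reduction modulo 3 is injective on `P_ℤ`: if `x ≡ y`, then `(x - y) / 3` lies strictly between
`0 ∈ int P` and `(x - y) / 2 ∈ P`, so it is an interior lattice point and must vanish. As
`|P_ℤ| = 3^d`, every class modulo 3 is represented in `P_ℤ`, and these representatives
span `ℝ^d`.

For a nonzero `x ∈ P_ℤ`, the smallest face `F(x)` containing `x` is proper and has `x` in its
relative interior. If `dim F(x) ≤ d - 2`, pick `u ∈ P_ℤ` outside `ℝ x + dir F(x)` and walk
from `u` along `x` to a lattice point `b ∈ P` with `x + b ∉ P`. For `c ∈ P_ℤ` with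
`c ≡ -(x + b)`, the point `m = (x + b + c) / 3` is a lattice point, nonzero since `-c ∈ P`,
and `F(m)` contains `x` and `b`, so `dir F(m) ⊋ dir F(x)`. Iterating reaches dimension `d - 1`.
-/

theorem Set.Finite.exists_add_nsmul_mem_add_notMem {G : Type*} [AddCommGroup G]
    [IsAddTorsionFree G] {A : Set G} (hA : A.Finite) {u x : G} (hu : u ∈ A) (hx : x ≠ 0) :
    ∃ n : ℕ, u + n • x ∈ A ∧ u + n • x + x ∉ A := by
  by_contra! h
  have hmem (n : ℕ) : u + n • x ∈ A := by
    induction n with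
    | zero => simpa using hu
    | succ n ih => simpa [succ_nsmul, add_assoc] using h n ih
  have hinj : Function.Injective fun n : ℕ => u + n • x :=
    (add_right_injective u).comp
      (injective_nsmul_iff_not_isOfFinAddOrder.2 (by rwa [isOfFinAddOrder_iff_eq_zero]))
  exact hA.not_infinite (Set.infinite_of_injective_forall_mem hinj hmem)

theorem Set.InjOn.surjOn_univ_of_ncard_eq {α β : Type*} [Finite β] {f : α → β} {s : Set α}
    (hf : Set.InjOn f s) (hs : s.ncard = Nat.card β) : Set.SurjOn f s Set.univ := by
  rw [Set.SurjOn, Set.univ_subset_iff]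
  exact Set.eq_of_subset_of_ncard_le (Set.subset_univ _)
    (by rw [hf.ncard_image, hs, Set.ncard_univ])

theorem span_singleton_sup_ne_top {E : Type*} [AddCommGroup E] [Module ℝ E]
    [FiniteDimensional ℝ E] (v : E) (W : Submodule ℝ E)
    (hW : Module.finrank ℝ W + 2 ≤ Module.finrank ℝ E) : ℝ ∙ v ⊔ W ≠ ⊤ := by
  intro h
  have hsup := Submodule.finrank_add_le_finrank_add_finrank (ℝ ∙ v) W
  have hv : Module.finrank ℝ (ℝ ∙ v) ≤ 1 := (finrank_span_le_card ({v} : Set E)).trans (by simp)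
  rw [h, finrank_top] at hsup
  omega

section MinFace

variable {E : Type*} [AddCommGroup E] [Module ℝ E] {P : Set E} {m y : E}

/-- For `m ∈ P`, the smallest face of `P` containing `m`. -/
def minFace (P : Set E) (m : E) : Set E :=
  {y ∈ P | ∃ ε > (0 : ℝ), m + ε • (m - y) ∈ P}

theorem minFace_subset : minFace P m ⊆ P := fun _ hy => hy.1

theorem self_mem_minFace (hm : m ∈ P) : m ∈ minFace P m :=
  ⟨hm, 1, one_pos, by simpa using hm⟩

theorem mem_openSegment_add_smul_sub (y m : E) {ε : ℝ} (hε : 0 < ε) :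
    m ∈ openSegment ℝ y (m + ε • (m - y)) := by
  refine ⟨ε / (1 + ε), 1 / (1 + ε), by positivity, by positivity, by field_simp; ring, ?_⟩
  match_scalars <;> field_simp
  ring

theorem Convex.mem_of_mem_minFace (hP : Convex ℝ P) (hy : y ∈ minFace P m) : m ∈ P := by
  obtain ⟨hyP, ε, hε, hz⟩ := hy
  exact hP.openSegment_subset hyP hz (mem_openSegment_add_smul_sub y m hε)

theorem Convex.convex_minFace (hP : Convex ℝ P) : Convex ℝ (minFace P m) := by
  rintro a ⟨haP, ε, hε, ha⟩ b ⟨hbP, δ, hδ, hb⟩ u v hu hv huv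
  have hden : 0 < u * δ + v * ε := by
    rcases hu.eq_or_lt with rfl | hu
    · obtain rfl : v = 1 := by linarith
      simpa using hε
    · positivity
  generalize hD : u * δ + v * ε = D at hden
  refine ⟨hP haP hbP hu hv huv, ε * δ / D, by positivity, ?_⟩
  convert hP ha hb (a := u * δ / D) (b := v * ε / D) (by positivity) (by positivity)
    (by field_simp; linarith) using 1
  match_scalars <;> field_simp
  linear_combination (-1) * hD - ε * δ * huv

theorem Convex.isExtreme_minFace (hP : Convex ℝ P) : IsExtreme ℝ P (minFace P m) := by
  refine ⟨minFace_subset, ?_⟩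
  rintro a haP b hbP c ⟨-, ε, hε, hc⟩ ⟨s, s', hs, hs', hss', rfl⟩
  refine ⟨haP, ε * s / (1 + ε * s'), by positivity, ?_⟩
  convert hP hc hbP (a := 1 / (1 + ε * s')) (b := ε * s' / (1 + ε * s')) (by positivity)
    (by positivity) (by field_simp) using 1
  match_scalars <;> field_simp
  · linear_combination ε * hss'
  · ring

theorem Convex.minFace_subset_minFace (hP : Convex ℝ P) (hy : y ∈ minFace P m) :
    minFace P y ⊆ minFace P m := by
  rintro w ⟨hwP, ε, hε, hz⟩
  exact (hP.isExtreme_minFace).2 hwP hz hy (mem_openSegment_add_smul_sub w y hε)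

theorem Convex.mem_minFace_centroid (hP : Convex ℝ P) {a b c : E} (ha : a ∈ P) (hb : b ∈ P)
    (hc : c ∈ P) : a ∈ minFace P ((1 / 3 : ℝ) • (a + b + c)) := by
  refine ⟨ha, 1 / 2, by norm_num, ?_⟩
  convert hP hb hc (a := 1 / 2) (b := 1 / 2) (by norm_num) (by norm_num) (by norm_num) using 1
  module

end MinFace

section IntrinsicInterior

theorem mem_intrinsicInterior_iff_exists_isOpen {𝕜 V Q : Type*} [Ring 𝕜] [AddCommGroup V]
    [Module 𝕜 V] [TopologicalSpace Q] [AddTorsor V Q] {s : Set Q} {x : Q}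
    (hx : x ∈ affineSpan 𝕜 s) :
    x ∈ intrinsicInterior 𝕜 s ↔
      ∃ U : Set Q, IsOpen U ∧ x ∈ U ∧ U ∩ (affineSpan 𝕜 s : Set Q) ⊆ s := by
  simp only [mem_intrinsicInterior, mem_interior, isOpen_induced_iff]
  constructor
  · rintro ⟨y, ⟨-, hUs, ⟨U, hU, rfl⟩, hyU⟩, rfl⟩
    exact ⟨U, hU, hyU, fun z hz => hUs (a := ⟨z, hz.2⟩) hz.1⟩
  · rintro ⟨U, hU, hxU, hUs⟩
    exact ⟨⟨x, hx⟩, ⟨_, fun z hz => hUs ⟨hz, z.2⟩, ⟨U, hU, rfl⟩, hxU⟩, rfl⟩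

variable {E : Type*} [NormedAddCommGroup E] [NormedSpace ℝ E] {s : Set E}

theorem intrinsicInterior_eq_interior_of_affineSpan_eq_top (hs : affineSpan ℝ s = ⊤) :
    intrinsicInterior ℝ s = interior s := by
  refine Set.Subset.antisymm ?_ interior_subset_intrinsicInterior
  intro x hx
  have hxs : x ∈ affineSpan ℝ s := hs ▸ AffineSubspace.mem_top ℝ E x
  obtain ⟨U, hU, hxU, hUs⟩ := (mem_intrinsicInterior_iff_exists_isOpen hxs).1 hx
  rw [hs, AffineSubspace.top_coe, Set.inter_univ] at hUs
  exact interior_maximal hUs hU hxU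

theorem Convex.homothety_mem_intrinsicInterior (hs : Convex ℝ s) {p r : E} {t : ℝ}
    (hp : p ∈ intrinsicInterior ℝ s) (hr : r ∈ s) (ht₀ : 0 < t) (ht₁ : t ≤ 1) :
    AffineMap.homothety r t p ∈ intrinsicInterior ℝ s := by
  have hspan {q : E} (hq : q ∈ s) := subset_affineSpan ℝ s hq
  have hrA := hspan hr
  obtain ⟨U, hU, hpU, hUs⟩ :=
    (mem_intrinsicInterior_iff_exists_isOpen (hspan (intrinsicInterior_subset hp))).1 hp
  refine (mem_intrinsicInterior_iff_exists_isOpen (AffineMap.homothety_mem hrA t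
    (hspan (intrinsicInterior_subset hp)))).2
    ⟨_, AffineMap.homothety_isOpenMap r t ht₀.ne' U hU, ⟨p, hpU, rfl⟩, ?_⟩
  rintro _ ⟨⟨w, hwU, rfl⟩, hwA⟩
  have hw : w ∈ affineSpan ℝ s := by
    simpa [← AffineMap.homothety_mul_apply, ht₀.ne'] using
      AffineMap.homothety_mem hrA t⁻¹ hwA
  rw [AffineMap.homothety_eq_lineMap]
  exact hs.lineMap_mem hr (hUs ⟨hwU, hw⟩) ⟨ht₀.le, ht₁⟩

theorem Convex.mem_intrinsicInterior_minFace [FiniteDimensional ℝ E] {P : Set E}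
    (hP : Convex ℝ P) {m : E} (hm : m ∈ P) : m ∈ intrinsicInterior ℝ (minFace P m) := by
  obtain ⟨p, hp⟩ := Set.Nonempty.intrinsicInterior hP.convex_minFace ⟨m, self_mem_minFace hm⟩
  obtain ⟨hpP, ε, hε, hz⟩ := intrinsicInterior_subset hp
  have hzF : m + ε • (m - p) ∈ minFace P m := ⟨hz, ε⁻¹, inv_pos.2 hε, by
    convert hpP using 1
    match_scalars <;> field_simp
    ring⟩
  convert hP.convex_minFace.homothety_mem_intrinsicInterior hp hzF
    (t := ε / (1 + ε)) (by positivity) (div_le_one_of_le₀ (by linarith) (by positivity)) using 1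
  rw [AffineMap.homothety_apply, vsub_eq_sub, vadd_eq_add]
  match_scalars <;> field_simp <;> ring

theorem Convex.minFace_ne_self [FiniteDimensional ℝ E] {P : Set E} (hP : Convex ℝ P) {m : E}
    (hm : m ∈ P) (hm' : m ∉ intrinsicInterior ℝ P) : minFace P m ≠ P :=
  fun h => hm' (h ▸ hP.mem_intrinsicInterior_minFace hm)

theorem Convex.finrank_vectorSpan_minFace_lt [FiniteDimensional ℝ E] {P : Set E}
    (hP : Convex ℝ P) {m : E} (hm : m ∈ P) (hm' : m ∉ intrinsicInterior ℝ P) :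
    Module.finrank ℝ (vectorSpan ℝ (minFace P m)) < Module.finrank ℝ E := by
  refine Submodule.finrank_lt fun htop => hm' ?_
  have hspan : affineSpan ℝ (minFace P m) = ⊤ :=
    (AffineSubspace.affineSpan_eq_top_iff_vectorSpan_eq_top_of_nonempty ℝ E E
      ⟨m, self_mem_minFace hm⟩).2 htop
  have hmF := hP.mem_intrinsicInterior_minFace hm
  rw [intrinsicInterior_eq_interior_of_affineSpan_eq_top hspan] at hmF
  exact interior_subset_intrinsicInterior (interior_mono minFace_subset hmF)

end IntrinsicInterior

section Lattice

variable {d : ℕ}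

@[simp] theorem ic_zero : ic (0 : Fin d → ℤ) = 0 := by funext; simp [ic]
@[simp] theorem ic_add (v w : Fin d → ℤ) : ic (v + w) = ic v + ic w := by funext; simp [ic]
@[simp] theorem ic_neg (v : Fin d → ℤ) : ic (-v) = -ic v := by funext; simp [ic]
@[simp] theorem ic_sub (v w : Fin d → ℤ) : ic (v - w) = ic v - ic w := by funext; simp [ic]
@[simp] theorem ic_zsmul (n : ℤ) (v : Fin d → ℤ) : ic (n • v) = (n : ℝ) • ic v := by
  funext; simp [ic]
@[simp] theorem ic_nsmul (n : ℕ) (v : Fin d → ℤ) : ic (n • v) = (n : ℝ) • ic v := by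
  funext; simp [ic]

def reduceMod (n : ℕ) (v : Fin d → ℤ) : Fin d → ZMod n := fun i => (v i : ZMod n)

theorem exists_sub_eq_smul_of_reduceMod_eq {n : ℕ} {v w : Fin d → ℤ}
    (h : reduceMod n v = reduceMod n w) : ∃ q : Fin d → ℤ, v - w = (n : ℤ) • q := by
  have hdvd (i : Fin d) : (n : ℤ) ∣ v i - w i :=
    (ZMod.intCast_eq_intCast_iff_dvd_sub _ _ _).1 (congrFun h i).symm
  choose q hq using hdvd
  exact ⟨q, funext fun i => by simpa using hq i⟩

theorem span_eq_top_of_forall_reduceMod {n : ℕ} [Nontrivial (ZMod n)]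
    (S : Submodule ℝ (Fin d → ℝ)) (h : ∀ c, ∃ v, ic v ∈ S ∧ reduceMod n v = c) : S = ⊤ := by
  choose g hgS hg using fun j : Fin d => h (Pi.single j 1)
  have hmod : (Matrix.of g).map (Int.cast : ℤ → ZMod n) = 1 := by
    ext i j
    simpa [reduceMod, Matrix.one_apply, Pi.single_apply, eq_comm] using congrFun (hg i) j
  have hdet : ((Matrix.of g).map (Int.cast : ℤ → ℝ)).det ≠ 0 := by
    rw [← Int.cast_det, Int.cast_ne_zero]
    intro h0
    simpa [Int.cast_det, hmod] using congrArg (Int.cast : ℤ → ZMod n) h0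
  have hli : LinearIndependent ℝ fun j => ic (g j) :=
    Matrix.linearIndependent_rows_of_det_ne_zero hdet
  rw [eq_top_iff, ← hli.span_eq_top_of_card_eq_finrank' (by simp)]
  exact Submodule.span_le.2 (Set.range_subset_iff.2 hgS)

end Lattice

section LatticePolytope

variable {d : ℕ} {P : Set (Fin d → ℝ)}

theorem neg_mem_latticePts (hsym : -P ⊆ P) {v : Fin d → ℤ} (hv : v ∈ latticePts P) :
    -v ∈ latticePts P := by
  simpa [latticePts] using hsym (Set.neg_mem_neg.2 hv)

theorem injOn_reduceMod_three (hP : Convex ℝ P) (hsym : -P ⊆ P) (h0 : 0 ∈ interior P)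
    (hint : ∀ v, ic v ∈ interior P → v = 0) : Set.InjOn (reduceMod 3) (latticePts P) := by
  intro x hx y hy hxy
  obtain ⟨w, hw⟩ := exists_sub_eq_smul_of_reduceMod_eq hxy
  have hmid : (1 / 2 : ℝ) • ic x + (1 / 2 : ℝ) • ic (-y) ∈ P :=
    hP hx (neg_mem_latticePts hsym hy) (by norm_num) (by norm_num) (by norm_num)
  have hw_int : ic w ∈ interior P := by
    convert hP.combo_interior_self_mem_interior h0 hmid (a := 1 / 3) (b := 2 / 3)
      (by norm_num) (by norm_num) (by norm_num) using 1
    have h3 : ic x - ic y = (3 : ℝ) • ic w := by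
      rw [← ic_sub, hw, ic_zsmul]; norm_num
    rw [ic_neg]
    linear_combination (norm := module) (-1 / 3 : ℝ) • h3
  rw [← sub_eq_zero, hw, hint w hw_int, smul_zero]

theorem exists_latticePts_mem_minFace (hP : Convex ℝ P) (hsym : -P ⊆ P)
    (hsurj : Set.SurjOn (reduceMod 3) (latticePts P) Set.univ) {a b : Fin d → ℤ}
    (ha : a ∈ latticePts P) (hb : b ∈ latticePts P) (hab : a + b ∉ latticePts P) :
    ∃ m ∈ latticePts P, m ≠ 0 ∧ ic a ∈ minFace P (ic m) ∧ ic b ∈ minFace P (ic m) := by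
  obtain ⟨c, hc, hcab⟩ := hsurj (Set.mem_univ (reduceMod 3 (-(a + b))))
  obtain ⟨m, hm⟩ := exists_sub_eq_smul_of_reduceMod_eq hcab
  have hicm : ic m = (1 / 3 : ℝ) • (ic a + ic b + ic c) := by
    have h3 : ic c + (ic a + ic b) = (3 : ℝ) • ic m := by
      rw [← ic_add, ← ic_add, ← sub_neg_eq_add, hm, ic_zsmul]; norm_num
    linear_combination (norm := module) (-1 / 3 : ℝ) • h3
  have haF : ic a ∈ minFace P (ic m) := hicm ▸ hP.mem_minFace_centroid ha hb hc
  have hbF : ic b ∈ minFace P (ic m) := by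
    rw [hicm, add_comm (ic a)]
    exact hP.mem_minFace_centroid hb ha hc
  refine ⟨m, hP.mem_of_mem_minFace haF, ?_, haF, hbF⟩
  rintro rfl
  rw [smul_zero, sub_eq_zero, eq_neg_iff_add_eq_zero, add_comm, ← eq_neg_iff_add_eq_zero] at hm
  exact hab (hm ▸ neg_mem_latticePts hsym hc)

theorem exists_latticePts_finrank_vectorSpan_minFace_lt (hP : Convex ℝ P) (hsym : -P ⊆ P)
    (hsurj : Set.SurjOn (reduceMod 3) (latticePts P) Set.univ) (hfin : (latticePts P).Finite)
    {x : Fin d → ℤ} (hx : x ∈ latticePts P) (hx₀ : x ≠ 0)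
    (hdim : Module.finrank ℝ (vectorSpan ℝ (minFace P (ic x))) + 2 ≤ d) :
    ∃ m ∈ latticePts P, m ≠ 0 ∧ Module.finrank ℝ (vectorSpan ℝ (minFace P (ic x))) <
      Module.finrank ℝ (vectorSpan ℝ (minFace P (ic m))) := by
  set W := vectorSpan ℝ (minFace P (ic x))
  have hS : ℝ ∙ ic x ⊔ W ≠ ⊤ := span_singleton_sup_ne_top _ W (by simpa using hdim)
  obtain ⟨u, hu, huS⟩ : ∃ u ∈ latticePts P, ic u ∉ ℝ ∙ ic x ⊔ W := by
    by_contra! h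
    refine hS (span_eq_top_of_forall_reduceMod (n := 3) _ fun c => ?_)
    obtain ⟨v, hv, rfl⟩ := hsurj (Set.mem_univ c)
    exact ⟨v, h v hv, rfl⟩
  obtain ⟨n, hb, hxb⟩ := hfin.exists_add_nsmul_mem_add_notMem hu hx₀
  obtain ⟨m, hm, hm₀, hxF, hbF⟩ :=
    exists_latticePts_mem_minFace hP hsym hsurj hx hb (by rwa [add_comm])
  refine ⟨m, hm, hm₀, Submodule.finrank_lt_finrank_of_lt <|
    (vectorSpan_mono ℝ (hP.minFace_subset_minFace hxF)).lt_of_ne fun hW => huS ?_⟩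
  have hbx : ic (u + n • x) - ic x ∈ vectorSpan ℝ (minFace P (ic x)) :=
    hW ▸ vsub_mem_vectorSpan ℝ hbF hxF
  have hu_eq : ic u = (ic (u + n • x) - ic x) + (1 - n : ℝ) • ic x := by
    simp only [ic_add, ic_nsmul]; module
  rw [hu_eq]
  exact add_mem (Submodule.mem_sup_right hbx)
    (Submodule.mem_sup_left (Submodule.smul_mem _ _ (Submodule.mem_span_singleton_self _)))

theorem exists_latticePts_le_finrank_vectorSpan_minFace (hP : Convex ℝ P) (hsym : -P ⊆ P)
    (hsurj : Set.SurjOn (reduceMod 3) (latticePts P) Set.univ) (hfin : (latticePts P).Finite)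
    (h₀ : ∃ x ∈ latticePts P, x ≠ 0) (k : ℕ) (hk : k ≤ d - 1) :
    ∃ m ∈ latticePts P, m ≠ 0 ∧ k ≤ Module.finrank ℝ (vectorSpan ℝ (minFace P (ic m))) := by
  induction k with
  | zero =>
    obtain ⟨x, hx, hx₀⟩ := h₀
    exact ⟨x, hx, hx₀, Nat.zero_le _⟩
  | succ k ih =>
    obtain ⟨m, hm, hm₀, hkm⟩ := ih (by omega)
    rcases le_or_gt (k + 1) (Module.finrank ℝ (vectorSpan ℝ (minFace P (ic m)))) with h | h
    · exact ⟨m, hm, hm₀, h⟩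
    · obtain ⟨m', hm', hm'₀, hlt⟩ :=
        exists_latticePts_finrank_vectorSpan_minFace_lt hP hsym hsurj hfin hm hm₀ (by omega)
      exact ⟨m', hm', hm'₀, by omega⟩

theorem Convex.isFaceOf_minFace (hP : Convex ℝ P) (m : Fin d → ℝ) : IsFaceOf P (minFace P m) :=
  ⟨hP.isExtreme_minFace, hP.convex_minFace⟩

end LatticePolytope

/-- Let `P` be a `d`-dimensional (`d ≥ 2`) centrally-symmetric lattice polytope with
    `P°_ℤ = {0}` and `|P_ℤ| = 3^d`.  For every `1 ≤ k ≤ d−1` there is a proper face of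
    `P` of dimension at least `k` whose relative interior contains a lattice point; in
    particular some facet of `P` has a lattice point in its relative interior. -/
theorem exists_face_with_interior_lattice_point {d : ℕ} (hd : 2 ≤ d)
    (P : Set (Fin d → ℝ))
    (hpoly : IsLatticePolytope P) (hdim : affineSpan ℝ P = ⊤)
    (hsym : P = -P) (hint : relintLatticePts P = {0})
    (hcard : (latticePts P).ncard = 3 ^ d) :
    (∀ k : ℕ, 1 ≤ k → k ≤ d - 1 →
      ∃ F : Set (Fin d → ℝ), IsFaceOf P F ∧ F ≠ P ∧
        k ≤ Module.finrank ℝ (vectorSpan ℝ F) ∧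
        ∃ x : Fin d → ℤ, ic x ∈ intrinsicInterior ℝ F) ∧
    (∃ F : Set (Fin d → ℝ), IsFaceOf P F ∧
      Module.finrank ℝ (vectorSpan ℝ F) = d - 1 ∧
      ∃ x : Fin d → ℤ, ic x ∈ intrinsicInterior ℝ F) := by
  have hP : Convex ℝ P := by
    obtain ⟨V, rfl⟩ := hpoly
    exact convex_convexHull ℝ _
  have hrelint (v : Fin d → ℤ) : ic v ∈ intrinsicInterior ℝ P ↔ v = 0 := by
    rw [← Set.mem_singleton_iff, ← hint]; rfl
  have h0 : (0 : Fin d → ℝ) ∈ interior P := by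
    rw [← intrinsicInterior_eq_interior_of_affineSpan_eq_top hdim, ← ic_zero]
    exact (hrelint 0).2 rfl
  have hinj := injOn_reduceMod_three hP hsym.symm.subset h0
    fun v hv => (hrelint v).1 (interior_subset_intrinsicInterior hv)
  have hsurj := hinj.surjOn_univ_of_ncard_eq (by simp [hcard, ZMod.card])
  have hfin : (latticePts P).Finite := Set.finite_of_ncard_pos (by rw [hcard]; positivity)
  have h₀ : ∃ x ∈ latticePts P, x ≠ 0 :=
    Set.exists_ne_of_one_lt_ncard (by rw [hcard]; exact Nat.one_lt_pow (by omega) (by norm_num)) 0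
  have hface := exists_latticePts_le_finrank_vectorSpan_minFace hP hsym.symm.subset hsurj hfin h₀
  have hboundary {m : Fin d → ℤ} (hm₀ : m ≠ 0) : ic m ∉ intrinsicInterior ℝ P :=
    fun h => hm₀ ((hrelint m).1 h)
  refine ⟨fun k _ hk => ?_, ?_⟩
  · obtain ⟨m, hm, hm₀, hkm⟩ := hface k hk
    exact ⟨_, hP.isFaceOf_minFace _, hP.minFace_ne_self hm (hboundary hm₀), hkm, m,
      hP.mem_intrinsicInterior_minFace hm⟩
  · obtain ⟨m, hm, hm₀, hkm⟩ := hface (d - 1) le_rfl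
    have hlt := hP.finrank_vectorSpan_minFace_lt hm (hboundary hm₀)
    rw [Module.finrank_fin_fun] at hlt
    exact ⟨_, hP.isFaceOf_minFace _, by omega, m, hP.mem_intrinsicInterior_minFace hm⟩
end
end
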